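/- arXiv:math/0611083 — 2 statements merged into one kernel-verified Lean document; each statement's English description precedes it below -/
import Mathlib

section
/- There exists a constant K > 0, independent of ε and of the coefficients (η_k), such that for every ε ∈ (0,1] with L/(2πε) a positive integer, (∫_{(0,L)×(0,1)} |β(x₁/ε, x₂/ε) − η₀|² dx)^{1/2} ≤ K √ε · M. (This is the macroscopic L² estimate for the oscillating boundary-layer corrector of Theorem 3.2, with M playing the role of the H^{1/2}(Γ) norm of the interface trace.) -/
open MeasureTheory Real Set

noncomputable section

/-- The smooth domain Ω⁰. -/
def Omega0 (L : ℝ) : Set (ℝ × ℝ) := Ioo 0 L ×ˢ Ioo (0 : ℝ) 1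

/-- The Fourier mode `e^{i k y₁ - |k| y₂}`. -/
def fourierMode (k : ℤ) (y₁ y₂ : ℝ) : ℂ :=
  Complex.exp (Complex.I * (k : ℂ) * (y₁ : ℂ) - ((|k| : ℤ) : ℂ) * (y₂ : ℂ))

/-- The boundary-layer corrector in the upper half plane, given by its Fourier series. -/
def blSeries (η : ℤ → ℂ) (y₁ y₂ : ℝ) : ℝ :=
  (∑' k : ℤ, η k * fourierMode k y₁ y₂).re

/-!
Write `β(y) - η₀ = ∑_{k ≠ 0} η_k e^{i k y₁ - |k| y₂}` and apply Cauchy–Schwarz with the weights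
`√(1 + |k|)`: pointwise, `|β(y) - η₀|² ≤ M² ∑_{k ≠ 0} e^{-2|k| y₂} / (1 + |k|)`. After the
rescaling `y₂ = x₂ / ε`, the `k`-th term integrates over `x₂ ∈ (0, 1)` to at most
`ε / (2|k| (1 + |k|)) ≤ ε / k²`, so the square of the `L²(Ω⁰)` norm is at most
`L ε M² ∑_{k ≠ 0} 1 / k²`.
-/

theorem Real.summable_and_tsum_mul_le_sqrt_mul_sqrt {ι : Type*} {f g : ι → ℝ}
    (hf : ∀ i, 0 ≤ f i) (hg : ∀ i, 0 ≤ g i)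
    (hf_sum : Summable fun i => f i ^ 2) (hg_sum : Summable fun i => g i ^ 2) :
    Summable (fun i => f i * g i) ∧
      ∑' i, f i * g i ≤ √(∑' i, f i ^ 2) * √(∑' i, g i ^ 2) := by
  have h := Real.summable_and_inner_le_Lp_mul_Lq_tsum_of_nonneg Real.HolderConjugate.two_two hf hg
    (by simpa [Real.rpow_two] using hf_sum) (by simpa [Real.rpow_two] using hg_sum)
  simpa [Real.rpow_two, Real.sqrt_eq_rpow, one_div] using h

lemma summable_exp_neg_abs_mul {y : ℝ} (hy : 0 < y) :
    Summable fun k : ℤ => exp (-|(k : ℝ)| * y) := by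
  have h : Summable fun n : ℕ => exp (n * -y) := Real.summable_exp_nat_mul_iff.mpr (by linarith)
  refine .of_nat_of_neg ?_ ?_ <;> refine h.congr fun n => ?_ <;> simp [mul_neg]

lemma norm_fourierMode (k : ℤ) (y₁ y₂ : ℝ) :
    ‖fourierMode k y₁ y₂‖ = exp (-|(k : ℝ)| * y₂) := by
  rw [fourierMode, Complex.norm_exp]
  simp [Complex.sub_re, Complex.mul_re]

lemma fourierMode_zero (y₁ y₂ : ℝ) : fourierMode 0 y₁ y₂ = 1 := by
  simp [fourierMode]

-- The mode `k = 0` is the mean `η₀`, which is subtracted off: its weight would not decay in `y`.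
def modeWeight (y : ℝ) (k : ℤ) : ℝ :=
  if k = 0 then 0 else exp (-|(k : ℝ)| * y) / √(1 + |(k : ℝ)|)

lemma modeWeight_nonneg (y : ℝ) (k : ℤ) : 0 ≤ modeWeight y k := by
  unfold modeWeight; split_ifs <;> positivity

lemma modeWeight_sq {k : ℤ} (hk : k ≠ 0) (y : ℝ) :
    modeWeight y k ^ 2 = exp (-(2 * |(k : ℝ)|) * y) / (1 + |(k : ℝ)|) := by
  rw [modeWeight, if_neg hk, div_pow, sq_sqrt (by positivity), ← exp_nat_mul]
  ring_nf

lemma summable_modeWeight_sq {y : ℝ} (hy : 0 < y) : Summable fun k => modeWeight y k ^ 2 := by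
  refine (summable_exp_neg_abs_mul (by positivity : 0 < 2 * y)).of_nonneg_of_le
    (fun k => sq_nonneg _) fun k => ?_
  rcases eq_or_ne k 0 with rfl | hk
  · simp [modeWeight]
  · rw [modeWeight_sq hk]
    refine div_le_self (by positivity) (by linarith [abs_nonneg (k : ℝ)]) |>.trans_eq ?_
    ring_nf

lemma norm_ite_mul_fourierMode (η : ℤ → ℂ) (k : ℤ) (y₁ y₂ : ℝ) :
    ‖if k = 0 then 0 else η k * fourierMode k y₁ y₂‖
      = √(1 + |(k : ℝ)|) * ‖η k‖ * modeWeight y₂ k := by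
  unfold modeWeight
  split_ifs
  · simp
  · rw [norm_mul, norm_fourierMode]
    field_simp

lemma abs_blSeries_sub_le (η : ℤ → ℂ)
    (hη : Summable fun k : ℤ => (1 + |(k : ℝ)|) * ‖η k‖ ^ 2) (y₁ : ℝ) {y₂ : ℝ} (hy : 0 < y₂) :
    |blSeries η y₁ y₂ - (η 0).re|
      ≤ √(∑' k : ℤ, (1 + |(k : ℝ)|) * ‖η k‖ ^ 2) * √(∑' k, modeWeight y₂ k ^ 2) := by
  set tail : ℤ → ℂ := fun k => if k = 0 then 0 else η k * fourierMode k y₁ y₂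
  have hsq : ∀ k : ℤ, (√(1 + |(k : ℝ)|) * ‖η k‖) ^ 2 = (1 + |(k : ℝ)|) * ‖η k‖ ^ 2 := fun k => by
    rw [mul_pow, sq_sqrt (by positivity)]
  obtain ⟨hsum, hle⟩ := Real.summable_and_tsum_mul_le_sqrt_mul_sqrt
    (f := fun k : ℤ => √(1 + |(k : ℝ)|) * ‖η k‖) (fun k => by positivity)
    (modeWeight_nonneg y₂) (by simpa only [hsq] using hη) (summable_modeWeight_sq hy)
  simp only [hsq] at hle
  have htail : Summable fun k => ‖tail k‖ := by
    simpa only [tail, norm_ite_mul_fourierMode] using hsum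
  have hsplit : HasSum (fun k => η k * fourierMode k y₁ y₂) (∑' k, tail k + η 0) := by
    have hterm : ∀ k, η k * fourierMode k y₁ y₂ = tail k + if k = 0 then η 0 else 0 := fun k => by
      by_cases hk : k = 0 <;> simp [tail, hk, fourierMode_zero]
    simpa only [← hterm] using htail.of_norm.hasSum.add (hasSum_ite_eq 0 (η 0))
  rw [blSeries, hsplit.tsum_eq, Complex.add_re, add_sub_cancel_right]
  calc |(∑' k, tail k).re| ≤ ‖∑' k, tail k‖ := Complex.abs_re_le_norm _
    _ ≤ ∑' k, ‖tail k‖ := norm_tsum_le_tsum_norm htail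
    _ ≤ _ := by simpa only [tail, norm_ite_mul_fourierMode] using hle

lemma sq_blSeries_sub_le (η : ℤ → ℂ)
    (hη : Summable fun k : ℤ => (1 + |(k : ℝ)|) * ‖η k‖ ^ 2) (y₁ : ℝ) {y₂ : ℝ} (hy : 0 < y₂) :
    (blSeries η y₁ y₂ - (η 0).re) ^ 2
      ≤ (∑' k : ℤ, (1 + |(k : ℝ)|) * ‖η k‖ ^ 2) * ∑' k, modeWeight y₂ k ^ 2 := by
  have h := pow_le_pow_left₀ (abs_nonneg _) (abs_blSeries_sub_le η hη y₁ hy) 2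
  rwa [sq_abs, mul_pow, sq_sqrt (tsum_nonneg fun k => by positivity),
    sq_sqrt (tsum_nonneg fun k => sq_nonneg _)] at h

lemma lintegral_modeWeight_sq_le {ε : ℝ} (hε : 0 < ε) (k : ℤ) :
    ∫⁻ t in Ioo (0 : ℝ) 1, ENNReal.ofReal (modeWeight (t / ε) k ^ 2)
      ≤ ENNReal.ofReal (ε / (k : ℝ) ^ 2) := by
  rcases eq_or_ne k 0 with rfl | hk
  · simp [modeWeight]
  have hk' : 0 < |(k : ℝ)| := abs_pos.mpr (Int.cast_ne_zero.mpr hk)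
  set a : ℝ := -(2 * |(k : ℝ)| / ε)
  have ha : a < 0 := neg_neg_of_pos (by positivity)
  have hweight : ∀ t, modeWeight (t / ε) k ^ 2 = exp (a * t) / (1 + |(k : ℝ)|) := fun t => by
    rw [modeWeight_sq hk]
    congr 2
    simp only [a]
    ring
  calc ∫⁻ t in Ioo (0 : ℝ) 1, ENNReal.ofReal (modeWeight (t / ε) k ^ 2)
      ≤ ∫⁻ t in Ioi (0 : ℝ), ENNReal.ofReal (exp (a * t) / (1 + |(k : ℝ)|)) := by
        simp only [hweight]
        exact lintegral_mono_set Ioo_subset_Ioi_self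
    _ = ENNReal.ofReal (∫ t in Ioi (0 : ℝ), exp (a * t) / (1 + |(k : ℝ)|)) :=
        (ofReal_integral_eq_lintegral_ofReal ((integrableOn_exp_mul_Ioi ha 0).div_const _)
          (ae_of_all _ fun t => by positivity)).symm
    _ ≤ ENNReal.ofReal (ε / (k : ℝ) ^ 2) := by
        refine ENNReal.ofReal_le_ofReal ?_
        rw [integral_div, integral_exp_mul_Ioi ha, mul_zero, exp_zero, ← sq_abs]
        simp only [a]
        field_simp
        nlinarith

@[fun_prop]
lemma continuous_modeWeight (k : ℤ) : Continuous fun y => modeWeight y k := by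
  unfold modeWeight
  split_ifs <;> fun_prop

lemma lintegral_tsum_modeWeight_sq_le {ε : ℝ} (hε : 0 < ε) :
    ∫⁻ t in Ioo (0 : ℝ) 1, ∑' k, ENNReal.ofReal (modeWeight (t / ε) k ^ 2)
      ≤ ENNReal.ofReal (ε * ∑' k : ℤ, 1 / (k : ℝ) ^ 2) := by
  have hsum : Summable fun k : ℤ => 1 / (k : ℝ) ^ 2 := summable_one_div_int_pow.mpr one_lt_two
  rw [lintegral_tsum fun k => by fun_prop,
    ← tsum_mul_left, ENNReal.ofReal_tsum_of_nonneg (fun k => by positivity) (hsum.mul_left ε)]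
  exact ENNReal.tsum_le_tsum fun k => by
    simpa only [mul_one_div] using lintegral_modeWeight_sq_le hε k

lemma integral_sq_blSeries_sub_le {L ε : ℝ} (hL : 0 ≤ L) (hε : 0 < ε) (η : ℤ → ℂ)
    (hη : Summable fun k : ℤ => (1 + |(k : ℝ)|) * ‖η k‖ ^ 2) :
    ∫ p in Omega0 L, (blSeries η (p.1 / ε) (p.2 / ε) - (η 0).re) ^ 2
      ≤ L * (ε * ∑' k : ℤ, 1 / (k : ℝ) ^ 2) * ∑' k : ℤ, (1 + |(k : ℝ)|) * ‖η k‖ ^ 2 := by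
  set W := ∑' k : ℤ, (1 + |(k : ℝ)|) * ‖η k‖ ^ 2
  set G : ℝ → ENNReal := fun t => ∑' k, ENNReal.ofReal (modeWeight (t / ε) k ^ 2)
  have hW : 0 ≤ W := tsum_nonneg fun k => by positivity
  have hpoint : ∀ p ∈ Omega0 L,
      ENNReal.ofReal ‖(blSeries η (p.1 / ε) (p.2 / ε) - (η 0).re) ^ 2‖
        ≤ ENNReal.ofReal W * G p.2 := by
    rintro p ⟨-, hp₂, -⟩
    have hy : 0 < p.2 / ε := div_pos hp₂ hε
    rw [Real.norm_of_nonneg (sq_nonneg _), show G p.2 = _ from (ENNReal.ofReal_tsum_of_nonneg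
      (fun k => sq_nonneg _) (summable_modeWeight_sq hy)).symm, ← ENNReal.ofReal_mul hW]
    exact ENNReal.ofReal_le_ofReal (sq_blSeries_sub_le η hη (p.1 / ε) hy)
  have hlint : ∫⁻ p in Omega0 L,
      ENNReal.ofReal ‖(blSeries η (p.1 / ε) (p.2 / ε) - (η 0).re) ^ 2‖
        ≤ ENNReal.ofReal (L * (ε * ∑' k : ℤ, 1 / (k : ℝ) ^ 2) * W) := by
    calc _ ≤ ∫⁻ p in Omega0 L, ENNReal.ofReal W * G p.2 :=
          setLIntegral_mono' (measurableSet_Ioo.prod measurableSet_Ioo) hpoint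
      _ = ENNReal.ofReal W * (ENNReal.ofReal L * ∫⁻ t in Ioo (0 : ℝ) 1, G t) := by
          rw [Omega0, Measure.volume_eq_prod, ← Measure.prod_restrict,
            lintegral_prod_mul (f := fun _ => ENNReal.ofReal W) (by fun_prop) (by fun_prop)]
          simp [mul_assoc]
      _ ≤ ENNReal.ofReal W *
            (ENNReal.ofReal L * ENNReal.ofReal (ε * ∑' k : ℤ, 1 / (k : ℝ) ^ 2)) := by
          grw [lintegral_tsum_modeWeight_sq_le hε]
      _ = _ := by
          rw [← ENNReal.ofReal_mul hL, ← ENNReal.ofReal_mul hW, mul_comm]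
  calc _ ≤ ‖∫ p in Omega0 L, (blSeries η (p.1 / ε) (p.2 / ε) - (η 0).re) ^ 2‖ := le_norm_self _
    _ ≤ _ := (norm_integral_le_lintegral_norm _).trans
        (ENNReal.toReal_le_of_le_ofReal (by positivity) hlint)

/-- Macroscopic L² estimate for the oscillating boundary layer (Theorem 3.2, last claim):
`‖β(·/ε) − β̄‖_{L²(Ω⁰)} ≤ K √ε ‖η‖_{H^{1/2}(Γ)}`, with `K` independent of `ε` and of `η`. -/
theorem boundary_layer_L2_macroscopic_estimate (L : ℝ) (hL : 0 < L) :
    ∃ K > (0 : ℝ), ∀ (η : ℤ → ℂ) (M : ℝ),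
      (∀ k : ℤ, η (-k) = starRingEnd ℂ (η k)) →
      Summable (fun k : ℤ => (1 + |(k : ℝ)|) * ‖η k‖ ^ 2) →
      0 ≤ M → M ^ 2 = ∑' k : ℤ, (1 + |(k : ℝ)|) * ‖η k‖ ^ 2 →
      ∀ ε : ℝ, 0 < ε → ε ≤ 1 → (∃ N : ℕ, 0 < N ∧ L = 2 * π * ε * N) →
        Real.sqrt (∫ p in Omega0 L,
            (blSeries η (p.1 / ε) (p.2 / ε) - (η 0).re) ^ 2)
          ≤ K * Real.sqrt ε * M := by
  have hC : 0 < ∑' k : ℤ, 1 / (k : ℝ) ^ 2 :=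
    (summable_one_div_int_pow.mpr one_lt_two).tsum_pos (fun k => by positivity) 1 (by norm_num)
  refine ⟨√(L * ∑' k : ℤ, 1 / (k : ℝ) ^ 2), by positivity, ?_⟩
  intro η M _ hη hM₀ hM ε hε _ _
  calc _ ≤ √(L * (ε * ∑' k : ℤ, 1 / (k : ℝ) ^ 2) * M ^ 2) :=
        sqrt_le_sqrt (hM ▸ integral_sq_blSeries_sub_le hL.le hε η hη)
    _ = √(L * ∑' k : ℤ, 1 / (k : ℝ) ^ 2) * √ε * M := by
        rw [sqrt_mul (by positivity), sqrt_sq hM₀, mul_left_comm, sqrt_mul hε.le]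
        ring

end
end

section
/- For every ε > 0, every β̄ > 0 and every γ̄ ∈ ℝ, the function u²(x₁,x₂) = −(C/2)(x₂² − x₂(1+ε²γ̄)/(1+εβ̄) − ε(β̄−εγ̄)/(1+εβ̄)) is the explicit solution of the second-order averaged wall-law problem with Wentzell boundary condition: it satisfies −Δu² = C on ℝ², u²(x₁,1) = 0 for all x₁, and u²(x₁,0) = ε β̄ ∂u²/∂x₂(x₁,0) + (ε²/2) γ̄ ∂²u²/∂x₂²(x₁,0) for all x₁. -/
/-!
`u²` depends on `x₂` alone and is a quadratic polynomial in `x₂` with leading coefficient `-C/2`,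
so `-Δu² = C`. Its two lower coefficients are the solution of the two linear equations given by
the boundary conditions, which hold once the denominator `1 + ε β̄ > 0` is cleared.
-/

open Real

noncomputable section

/-- Partial derivative in the first variable. -/
def pd1 (u : ℝ → ℝ → ℝ) (x y : ℝ) : ℝ := deriv (fun t => u t y) x

/-- Partial derivative in the second variable. -/
def pd2 (u : ℝ → ℝ → ℝ) (x y : ℝ) : ℝ := deriv (fun t => u x t) y

/-- Laplacian. -/
def lap (u : ℝ → ℝ → ℝ) (x y : ℝ) : ℝ := pd1 (pd1 u) x y + pd2 (pd2 u) x y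

/-- The explicit second-order averaged wall-law solution. -/
def wallLaw2 (C ε βbar γbar : ℝ) (x₁ x₂ : ℝ) : ℝ :=
  -(C / 2) * (x₂ ^ 2 - x₂ * (1 + ε ^ 2 * γbar) / (1 + ε * βbar)
    - ε * (βbar - ε * γbar) / (1 + ε * βbar))

section FunctionOfSecondVariable

variable (f : ℝ → ℝ)

lemma pd1_fun_snd : pd1 (fun _ t => f t) = fun _ _ => 0 := by
  funext x y
  simp [pd1]

lemma pd2_fun_snd : pd2 (fun _ t => f t) = fun _ t => deriv f t := rfl

lemma lap_fun_snd (x y : ℝ) : lap (fun _ t => f t) x y = deriv (deriv f) y := by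
  rw [lap, pd1_fun_snd, pd1_fun_snd, zero_add, pd2_fun_snd, pd2_fun_snd]

end FunctionOfSecondVariable

section Quadratic

variable (a b c : ℝ)

lemma deriv_quadratic : deriv (fun t => a * t ^ 2 + b * t + c) = fun t => 2 * a * t + b := by
  funext t
  have h := (((hasDerivAt_pow 2 t).const_mul a).fun_add ((hasDerivAt_id' t).const_mul b)).add_const c
  exact h.deriv.trans (by norm_num; ring)

lemma deriv_deriv_quadratic (y : ℝ) : deriv (deriv fun t => a * t ^ 2 + b * t + c) y = 2 * a := by
  rw [deriv_quadratic]
  exact (((hasDerivAt_id' y).const_mul (2 * a)).add_const b).deriv.trans (by ring)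

end Quadratic

section WallLaw

variable (C ε βbar γbar : ℝ)

lemma wallLaw2_eq_quadratic :
    wallLaw2 C ε βbar γbar = fun _ t => -(C / 2) * t ^ 2
      + C / 2 * ((1 + ε ^ 2 * γbar) / (1 + ε * βbar)) * t
      + C / 2 * (ε * (βbar - ε * γbar) / (1 + ε * βbar)) := by
  funext _ t
  rw [wallLaw2]
  ring

lemma pd2_wallLaw2 (x y : ℝ) :
    pd2 (wallLaw2 C ε βbar γbar) x y
      = -C * y + C / 2 * ((1 + ε ^ 2 * γbar) / (1 + ε * βbar)) := by
  rw [wallLaw2_eq_quadratic, pd2_fun_snd, deriv_quadratic]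
  beta_reduce
  ring

lemma pd2_pd2_wallLaw2 (x y : ℝ) : pd2 (pd2 (wallLaw2 C ε βbar γbar)) x y = -C := by
  rw [wallLaw2_eq_quadratic, pd2_fun_snd, pd2_fun_snd]
  beta_reduce
  rw [deriv_deriv_quadratic]
  ring

lemma lap_wallLaw2 (x y : ℝ) : lap (wallLaw2 C ε βbar γbar) x y = -C := by
  rw [wallLaw2_eq_quadratic, lap_fun_snd, deriv_deriv_quadratic]
  ring

end WallLaw

theorem second_order_averaged_wall_law_explicit_solution_general
    (C ε βbar γbar : ℝ) (hε : 0 < ε) (hβ : 0 < βbar) :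
    (∀ x₁ x₂ : ℝ, -(lap (wallLaw2 C ε βbar γbar) x₁ x₂) = C) ∧
    (∀ x₁ : ℝ, wallLaw2 C ε βbar γbar x₁ 1 = 0) ∧
    (∀ x₁ : ℝ, wallLaw2 C ε βbar γbar x₁ 0
      = ε * βbar * pd2 (wallLaw2 C ε βbar γbar) x₁ 0
        + (ε ^ 2 / 2) * γbar * pd2 (pd2 (wallLaw2 C ε βbar γbar)) x₁ 0) := by
  have hden : 1 + ε * βbar ≠ 0 := by positivity
  refine ⟨fun x₁ x₂ => ?_, fun x₁ => ?_, fun x₁ => ?_⟩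
  · rw [lap_wallLaw2, neg_neg]
  · rw [wallLaw2]
    field_simp
    ring
  · rw [pd2_wallLaw2, pd2_pd2_wallLaw2, wallLaw2]
    field_simp
    ring

/-- The explicit profile `u²` solves the second-order averaged wall-law problem with
Wentzell boundary condition: `−Δu² = C`, `u²(·,1) = 0`, and
`u²(·,0) = ε β̄ ∂u²/∂x₂(·,0) + (ε²/2) γ̄ ∂²u²/∂x₂²(·,0)`. -/
theorem second_order_averaged_wall_law_explicit_solution
    (C ε βbar γbar : ℝ) (hC : 0 < C) (hε : 0 < ε) (hβ : 0 < βbar) :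
    (∀ x₁ x₂ : ℝ, -(lap (wallLaw2 C ε βbar γbar) x₁ x₂) = C) ∧
    (∀ x₁ : ℝ, wallLaw2 C ε βbar γbar x₁ 1 = 0) ∧
    (∀ x₁ : ℝ, wallLaw2 C ε βbar γbar x₁ 0
      = ε * βbar * pd2 (wallLaw2 C ε βbar γbar) x₁ 0
        + (ε ^ 2 / 2) * γbar * pd2 (pd2 (wallLaw2 C ε βbar γbar)) x₁ 0) :=
  second_order_averaged_wall_law_explicit_solution_general C ε βbar γbar hε hβ

end
end
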